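/- arXiv:1105.4070 — 3 statements merged into one kernel-verified Lean document; each statement's English description precedes it below -/
import Mathlib

section
/- Let N ≥ 2 be a natural number, s ∈ ℝ, n ∈ ℕ, and let h₁ < h₂ < … < h_n be distinct real numbers. Let u₁, …, u_n be measurable complex-valued functions on the unit sphere S^{N−1} with 0 < ∫_{S^{N−1}} |u_i|² dω < ∞ for every i. Given coefficients c₁, …, c_n ∈ ℂ, define f(x) := Σ_{i=1}^n c_i · ‖x‖^{h_i} · u_i(x/‖x‖) for x ≠ 0. Then f belongs to L²_s(A_1), i.e. ∫_{A_1} (1+‖x‖²)^s |f(x)|² dx < ∞, if and only if c_i = 0 for every index i with h_i ≥ −s − N/2. (This is the membership criterion of Theorem 2.6: a finite spherical-harmonics-type expansion lies in the weighted space exactly when all coefficients of homogeneity degree ≥ −s − N/2 vanish.) -/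
/-!
In polar coordinates `x = r • y` the weighted norm becomes
`∫₁^∞ r^(N-1) (1 + r²)^s ‖V r‖² dr`, where `V r = ∑ i, r^(h i) • (c i • u i)` is taken in
`L²(S^{N-1})`. If `T` is the largest index with `c T ≠ 0`, then `u T ≠ 0` in `L²` and every
other nonzero term is of strictly lower order, so `‖V r‖ ≍ r^(h T)` for large `r`, with the
upper bound valid on all of `[1, ∞)`. Since `(1 + r²)^s ≍ r^(2s)` there, the integral is finite
exactly when `N - 1 + 2s + 2 h T < -1`, i.e. when `h T < -s - N/2`.
-/

open MeasureTheory Metric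

noncomputable section

/-- The radial projection of a nonzero vector onto the unit sphere. -/
def sphereProj {N : ℕ} (x : EuclideanSpace ℝ (Fin N)) (hx : x ≠ 0) :
    Metric.sphere (0 : EuclideanSpace ℝ (Fin N)) 1 :=
  ⟨‖x‖⁻¹ • x, by
    rw [mem_sphere_zero_iff_norm, norm_smul, norm_inv, norm_norm,
      inv_mul_cancel₀ (norm_ne_zero_iff.mpr hx)]⟩

open Set Filter Topology
open scoped ENNReal

theorem lintegral_Ioi_rpow_lt_top_iff {a e : ℝ} (ha : 0 < a) :
    ∫⁻ r in Ioi a, ENNReal.ofReal (r ^ e) < ∞ ↔ e < -1 := by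
  rw [← integrableOn_Ioi_rpow_iff ha, IntegrableOn, Integrable,
    hasFiniteIntegral_iff_ofReal, iff_and_self]
  · exact fun _ => (by fun_prop : Measurable fun r : ℝ => r ^ e).aestronglyMeasurable
  · filter_upwards [ae_restrict_mem measurableSet_Ioi] with r hr
    exact Real.rpow_nonneg (ha.trans hr).le e

theorem lintegral_Ioi_lt_top_of_le_rpow {a C e : ℝ} (ha : 0 < a) (he : e < -1)
    {F : ℝ → ℝ≥0∞} (hF : ∀ r, a < r → F r ≤ ENNReal.ofReal (C * r ^ e)) :
    ∫⁻ r in Ioi a, F r < ∞ := calc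
  ∫⁻ r in Ioi a, F r ≤ ∫⁻ r in Ioi a, ENNReal.ofReal C * ENNReal.ofReal (r ^ e) :=
    setLIntegral_mono' measurableSet_Ioi fun r hr =>
      (hF r hr).trans_eq (ENNReal.ofReal_mul' (Real.rpow_nonneg (ha.trans hr).le e))
  _ = ENNReal.ofReal C * ∫⁻ r in Ioi a, ENNReal.ofReal (r ^ e) :=
    lintegral_const_mul' _ _ ENNReal.ofReal_ne_top
  _ < ∞ := ENNReal.mul_lt_top ENNReal.ofReal_lt_top ((lintegral_Ioi_rpow_lt_top_iff ha).2 he)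

theorem lintegral_Ioi_eq_top_of_rpow_le (a : ℝ) {c e : ℝ} (hc : 0 < c) (he : -1 ≤ e)
    {F : ℝ → ℝ≥0∞} (hF : ∀ᶠ r in atTop, ENNReal.ofReal (c * r ^ e) ≤ F r) :
    ∫⁻ r in Ioi a, F r = ∞ := by
  obtain ⟨R, hR⟩ := eventually_atTop.1 (hF.and (eventually_gt_atTop (max a 0)))
  have hR0 : 0 < R := (le_max_right a 0).trans_lt (hR R le_rfl).2
  have htail : ∫⁻ r in Ioi R, ENNReal.ofReal (r ^ e) = ∞ :=
    not_lt_top_iff.1 (mt (lintegral_Ioi_rpow_lt_top_iff hR0).1 he.not_gt)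
  refine eq_top_iff.2 <| calc
    ∞ = ENNReal.ofReal c * ∫⁻ r in Ioi R, ENNReal.ofReal (r ^ e) := by
      rw [htail, ENNReal.mul_top (by simpa using hc)]
    _ = ∫⁻ r in Ioi R, ENNReal.ofReal (c * r ^ e) := by
      rw [← lintegral_const_mul' _ _ ENNReal.ofReal_ne_top]
      exact setLIntegral_congr_fun measurableSet_Ioi fun r hr =>
        (ENNReal.ofReal_mul hc.le).symm
    _ ≤ ∫⁻ r in Ioi R, F r := setLIntegral_mono' measurableSet_Ioi fun r hr => (hR r hr.le).1
    _ ≤ ∫⁻ r in Ioi a, F r :=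
      lintegral_mono_set (Ioi_subset_Ioi ((le_max_left a 0).trans (hR R le_rfl).2.le))

theorem one_add_sq_rpow_le {r : ℝ} (hr : 1 ≤ r) (s : ℝ) :
    (1 + r ^ 2) ^ s ≤ max 1 (2 ^ s) * r ^ (2 * s) := by
  rw [Real.rpow_mul (by positivity), Real.rpow_two]
  rcases le_total 0 s with hs | hs
  · calc (1 + r ^ 2) ^ s ≤ (2 * r ^ 2) ^ s := by gcongr; nlinarith
      _ = 2 ^ s * (r ^ 2) ^ s := Real.mul_rpow (by norm_num) (by positivity)
      _ ≤ max 1 (2 ^ s) * (r ^ 2) ^ s := by gcongr; exact le_max_right _ _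
  · calc (1 + r ^ 2) ^ s ≤ (r ^ 2) ^ s :=
          Real.rpow_le_rpow_of_nonpos (by positivity) (by linarith) hs
      _ ≤ max 1 (2 ^ s) * (r ^ 2) ^ s := le_mul_of_one_le_left (by positivity) (le_max_left _ _)

theorem le_one_add_sq_rpow {r : ℝ} (hr : 1 ≤ r) (s : ℝ) :
    min 1 (2 ^ s) * r ^ (2 * s) ≤ (1 + r ^ 2) ^ s := by
  rw [Real.rpow_mul (by positivity), Real.rpow_two]
  rcases le_total 0 s with hs | hs
  · calc min 1 (2 ^ s) * (r ^ 2) ^ s ≤ (r ^ 2) ^ s :=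
          mul_le_of_le_one_left (by positivity) (min_le_left _ _)
      _ ≤ (1 + r ^ 2) ^ s := by gcongr; linarith
  · calc min 1 (2 ^ s) * (r ^ 2) ^ s ≤ 2 ^ s * (r ^ 2) ^ s := by gcongr; exact min_le_right _ _
      _ = (2 * r ^ 2) ^ s := (Real.mul_rpow (by norm_num) (by positivity)).symm
      _ ≤ (1 + r ^ 2) ^ s := Real.rpow_le_rpow_of_nonpos (by positivity) (by nlinarith) hs

theorem lintegral_Ioi_one_weight_mul_enorm_sq_lt_top_iff {E : Type*} [NormedAddCommGroup E]
    {m s a C c : ℝ} (hc : 0 < c) (φ : ℝ → E) (hup : ∀ r, 1 < r → ‖φ r‖ ≤ C * r ^ a)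
    (hlow : ∀ᶠ r in atTop, c * r ^ a ≤ ‖φ r‖) :
    ∫⁻ r in Ioi 1, ENNReal.ofReal (r ^ m * (1 + r ^ 2) ^ s) * ‖φ r‖ₑ ^ 2 < ∞ ↔
      m + 2 * s + 2 * a < -1 := by
  have hexp : ∀ r : ℝ, 0 < r →
      r ^ (m + 2 * s + 2 * a) = r ^ m * r ^ (2 * s) * (r ^ a) ^ 2 := by
    intro r hr
    rw [Real.rpow_add hr, Real.rpow_add hr, mul_comm 2 a, Real.rpow_mul hr.le a 2, Real.rpow_two]
  have hintegrand : ∀ r, ENNReal.ofReal (r ^ m * (1 + r ^ 2) ^ s) * ‖φ r‖ₑ ^ 2 =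
      ENNReal.ofReal (r ^ m * (1 + r ^ 2) ^ s * ‖φ r‖ ^ 2) := by
    intro r
    rw [ENNReal.ofReal_mul' (q := ‖φ r‖ ^ 2) (by positivity), ENNReal.ofReal_pow (norm_nonneg _),
      ofReal_norm]
  simp_rw [hintegrand]
  constructor
  · intro hfin
    by_contra hge
    refine hfin.ne (lintegral_Ioi_eq_top_of_rpow_le 1 (c := min 1 (2 ^ s) * c ^ 2)
      (by positivity) (not_lt.1 hge) ?_)
    filter_upwards [hlow, eventually_ge_atTop 1] with r hlow hr
    refine ENNReal.ofReal_le_ofReal ?_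
    have hr0 : 0 < r := one_pos.trans_le hr
    calc min 1 (2 ^ s) * c ^ 2 * r ^ (m + 2 * s + 2 * a)
        = r ^ m * (min 1 (2 ^ s) * r ^ (2 * s)) * (c * r ^ a) ^ 2 := by
          rw [hexp r hr0]; ring
      _ ≤ r ^ m * (1 + r ^ 2) ^ s * ‖φ r‖ ^ 2 := by
          gcongr
          exact le_one_add_sq_rpow hr s
  · intro he
    refine lintegral_Ioi_lt_top_of_le_rpow one_pos he (C := max 1 (2 ^ s) * C ^ 2) fun r hr => ?_
    refine ENNReal.ofReal_le_ofReal ?_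
    have hr0 : 0 < r := one_pos.trans hr
    calc r ^ m * (1 + r ^ 2) ^ s * ‖φ r‖ ^ 2
        ≤ r ^ m * (max 1 (2 ^ s) * r ^ (2 * s)) * (C * r ^ a) ^ 2 := by
          gcongr
          · exact one_add_sq_rpow_le hr.le s
          · exact hup r hr
      _ = max 1 (2 ^ s) * C ^ 2 * r ^ (m + 2 * s + 2 * a) := by
          rw [hexp r hr0]; ring

section RpowSum

variable {E : Type*} [NormedAddCommGroup E] [NormedSpace ℝ E] {ι : Type*} {s : Finset ι}
  {w : ι → E} {h : ι → ℝ}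

theorem norm_sum_rpow_smul_le {a r : ℝ} (hr : 1 ≤ r) (ha : ∀ i ∈ s, w i ≠ 0 → h i ≤ a) :
    ‖∑ i ∈ s, r ^ h i • w i‖ ≤ (∑ i ∈ s, ‖w i‖) * r ^ a := by
  rw [Finset.sum_mul]
  refine (norm_sum_le _ _).trans (Finset.sum_le_sum fun i hi => ?_)
  rw [norm_smul, Real.norm_of_nonneg (by positivity), mul_comm]
  by_cases hw : w i = 0
  · simp [hw]
  · gcongr
    exact ha i hi hw

theorem tendsto_rpow_neg_smul_sum_rpow_smul {j : ι} (hj : j ∈ s)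
    (hlt : ∀ i ∈ s, i ≠ j → w i ≠ 0 → h i < h j) :
    Tendsto (fun r : ℝ => r ^ (-h j) • ∑ i ∈ s, r ^ h i • w i) atTop (𝓝 (w j)) := by
  classical
  have hterm : ∀ i ∈ s,
      Tendsto (fun r : ℝ => r ^ (h i - h j) • w i) atTop (𝓝 (if j = i then w i else 0)) := by
    intro i hi
    by_cases hij : j = i
    · subst hij
      simp
    by_cases hw : w i = 0
    · simp [hw]
    have hneg := tendsto_rpow_neg_atTop (sub_pos.2 (hlt i hi (Ne.symm hij) hw))
    rw [neg_sub] at hneg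
    rw [if_neg hij, ← zero_smul ℝ (w i)]
    exact hneg.smul_const (w i)
  have hsum := tendsto_finsetSum s hterm
  rw [Finset.sum_ite_eq, if_pos hj] at hsum
  refine hsum.congr' ?_
  filter_upwards [eventually_gt_atTop 0] with r hr
  simp_rw [Finset.smul_sum, smul_smul, ← Real.rpow_add hr, neg_add_eq_sub]

theorem eventually_le_norm_sum_rpow_smul {j : ι} (hj : j ∈ s) (hwj : w j ≠ 0)
    (hlt : ∀ i ∈ s, i ≠ j → w i ≠ 0 → h i < h j) :
    ∀ᶠ r in atTop, ‖w j‖ / 2 * r ^ h j ≤ ‖∑ i ∈ s, r ^ h i • w i‖ := by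
  have hlim := (tendsto_rpow_neg_smul_sum_rpow_smul hj hlt).norm
  filter_upwards [hlim.eventually (lt_mem_nhds (half_lt_self (norm_pos_iff.2 hwj))),
    eventually_gt_atTop 0] with r hlow hr
  rw [norm_smul, Real.norm_of_nonneg (by positivity), Real.rpow_neg hr.le,
    inv_mul_eq_div, lt_div_iff₀ (by positivity)] at hlow
  exact hlow.le

end RpowSum
theorem lintegral_ofReal_norm_sq_eq_eLpNorm_sq {α F : Type*} [MeasurableSpace α]
    [NormedAddCommGroup F] (μ : Measure α) (f : α → F) :
    ∫⁻ y, ENNReal.ofReal (‖f y‖ ^ 2) ∂μ = eLpNorm f 2 μ ^ 2 := by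
  simp_rw [ENNReal.ofReal_pow (norm_nonneg _), ofReal_norm]
  simpa using (eLpNorm_nnreal_pow_eq_lintegral (μ := μ) (f := f) (p := 2) two_ne_zero).symm

theorem lintegral_eq_lintegral_Ioi_toSphere {E : Type*} [NormedAddCommGroup E] [NormedSpace ℝ E]
    [FiniteDimensional ℝ E] [MeasurableSpace E] [BorelSpace E] [Nontrivial E]
    (μ : Measure E) [μ.IsAddHaarMeasure] {g : sphere (0 : E) 1 → ℝ → ℝ≥0∞}
    (hg : Measurable (Function.uncurry g)) {G : E → ℝ≥0∞}
    (hG : ∀ x (hx : x ≠ 0), G x = g (homeomorphUnitSphereProd E ⟨x, hx⟩).1 ‖x‖) :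
    ∫⁻ x, G x ∂μ = ∫⁻ r in Ioi 0,
      ENNReal.ofReal (r ^ (Module.finrank ℝ E - 1)) * ∫⁻ y, g y r ∂μ.toSphere := by
  set g' : sphere (0 : E) 1 × Ioi (0 : ℝ) → ℝ≥0∞ := fun p => g p.1 p.2
  have hg' : Measurable g' :=
    hg.comp (measurable_fst.prodMk (measurable_subtype_coe.comp measurable_snd))
  calc ∫⁻ x, G x ∂μ = ∫⁻ x in {0}ᶜ, G x ∂μ := by rw [restrict_compl_singleton]
    _ = ∫⁻ x : ({0}ᶜ : Set E), G x ∂μ.comap (↑) :=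
      (lintegral_subtype_comap (measurableSet_singleton 0).compl _).symm
    _ = ∫⁻ x : ({0}ᶜ : Set E), g' (homeomorphUnitSphereProd E x) ∂μ.comap (↑) :=
      lintegral_congr fun x => by simp [g', hG x.1 x.2]
    _ = ∫⁻ p, g' p ∂(μ.toSphere.prod (Measure.volumeIoiPow (Module.finrank ℝ E - 1))) :=
      (Measure.measurePreserving_homeomorphUnitSphereProd μ).lintegral_comp hg'
    _ = ∫⁻ r, ∫⁻ y, g' (y, r) ∂μ.toSphere ∂Measure.volumeIoiPow (Module.finrank ℝ E - 1) :=
      lintegral_prod_symm' g' hg'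
    _ = _ := by
      rw [Measure.volumeIoiPow, lintegral_withDensity_eq_lintegral_mul _ (by fun_prop)
        hg'.lintegral_prod_left']
      exact lintegral_subtype_comap measurableSet_Ioi
        (fun r => ENNReal.ofReal (r ^ (Module.finrank ℝ E - 1)) * ∫⁻ y, g y r ∂μ.toSphere)

theorem setLIntegral_one_le_norm_eq_lintegral_Ioi_eLpNorm {N : ℕ} (hN : 0 < N)
    {F : Type*} [NormedAddCommGroup F] [MeasurableSpace F] [BorelSpace F]
    {W : ℝ → ℝ} (hW : Measurable W) {v : ℝ → sphere (0 : EuclideanSpace ℝ (Fin N)) 1 → F}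
    (hv : Measurable (Function.uncurry v)) {f : EuclideanSpace ℝ (Fin N) → F}
    (hf : ∀ x (hx : x ≠ 0), f x = v ‖x‖ (sphereProj x hx)) :
    ∫⁻ x in {x | 1 ≤ ‖x‖}, ENNReal.ofReal (W ‖x‖ * ‖f x‖ ^ 2) =
      ∫⁻ r in Ioi 1, ENNReal.ofReal (r ^ ((N : ℝ) - 1) * W r) *
        eLpNorm (v r) 2 (volume : Measure (EuclideanSpace ℝ (Fin N))).toSphere ^ 2 := by
  have : Nonempty (Fin N) := ⟨⟨0, hN⟩⟩
  set g : sphere (0 : EuclideanSpace ℝ (Fin N)) 1 → ℝ → ℝ≥0∞ := fun y r =>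
    if 1 ≤ r then ENNReal.ofReal (W r) * ENNReal.ofReal (‖v r y‖ ^ 2) else 0
  have hg : Measurable (Function.uncurry g) :=
    Measurable.ite (measurableSet_le measurable_const measurable_snd)
      ((hW.comp measurable_snd).ennreal_ofReal.mul
        ((hv.comp measurable_swap).norm.pow_const 2).ennreal_ofReal)
      measurable_const
  have hG : ∀ x (hx : x ≠ 0), {x : EuclideanSpace ℝ (Fin N) | 1 ≤ ‖x‖}.indicator
      (fun x => ENNReal.ofReal (W ‖x‖ * ‖f x‖ ^ 2)) x =
        g (homeomorphUnitSphereProd _ ⟨x, hx⟩).1 ‖x‖ := by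
    intro x hx
    have hproj : sphereProj x hx = (homeomorphUnitSphereProd _ ⟨x, hx⟩).1 := by
      ext1; simp [sphereProj]
    simp only [indicator_apply, mem_ofPred_eq, g, ← hproj, ← hf x hx]
    split_ifs
    · exact ENNReal.ofReal_mul' (by positivity)
    · rfl
  have hradial : ∀ r, ENNReal.ofReal (r ^ (N - 1)) *
      ∫⁻ y, g y r ∂(volume : Measure (EuclideanSpace ℝ (Fin N))).toSphere =
        (Ici 1).indicator (fun r => ENNReal.ofReal (r ^ ((N : ℝ) - 1) * W r) *
          eLpNorm (v r) 2 (volume : Measure (EuclideanSpace ℝ (Fin N))).toSphere ^ 2) r := by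
    intro r
    by_cases hr : 1 ≤ r
    · simp only [g, if_pos hr, indicator_of_mem (mem_Ici.2 hr)]
      rw [lintegral_const_mul' _ _ ENNReal.ofReal_ne_top, lintegral_ofReal_norm_sq_eq_eLpNorm_sq,
        ← mul_assoc, ← ENNReal.ofReal_mul (by positivity), ← Real.rpow_natCast,
        Nat.cast_sub hN, Nat.cast_one]
    · simp [g, hr]
  rw [← lintegral_indicator (measurableSet_le measurable_const continuous_norm.measurable),
    lintegral_eq_lintegral_Ioi_toSphere volume hg hG, finrank_euclideanSpace_fin,
    lintegral_congr hradial, lintegral_indicator measurableSet_Ici,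
    Measure.restrict_restrict measurableSet_Ici,
    inter_eq_left.2 (Ici_subset_Ioi.2 one_pos),
    Measure.restrict_congr_set Ioi_ae_eq_Ici]

theorem eLpNorm_sum_smul_eq_enorm_sum_smul_toLp {α ι F : Type*} [MeasurableSpace α]
    {μ : Measure α} [NormedAddCommGroup F] [NormedSpace ℝ F] {p : ℝ≥0∞} (s : Finset ι)
    {u : ι → α → F} (hu : ∀ i, MemLp (u i) p μ) (a : ι → ℝ) :
    eLpNorm (fun y => ∑ i ∈ s, a i • u i y) p μ = ‖∑ i ∈ s, a i • (hu i).toLp (u i)‖ₑ := by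
  rw [Lp.enorm_def]
  refine eLpNorm_congr_ae ?_
  filter_upwards [Lp.coeFn_fun_finsetSum s fun i => a i • (hu i).toLp (u i),
    (eventually_all_finset s).2 fun i _ => Lp.coeFn_smul (a i) ((hu i).toLp (u i)),
    (eventually_all_finset s).2 fun i _ => (hu i).coeFn_toLp] with y hsum hsmul htoLp
  rw [hsum]
  exact Finset.sum_congr rfl fun i hi => by rw [hsmul i hi, Pi.smul_apply, htoLp i hi]

theorem forall_le_imp_eq_zero_iff_lt {ι M : Type*} [Zero M] {c : ι → M} {h : ι → ℝ} {T : ι}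
    (hcT : c T ≠ 0) (hle : ∀ i, c i ≠ 0 → h i ≤ h T) (b : ℝ) :
    (∀ i, b ≤ h i → c i = 0) ↔ h T < b := by
  refine ⟨fun hvanish => lt_of_not_ge fun hb => hcT (hvanish T hb), fun hlt i hi => ?_⟩
  by_contra hci
  exact (hle i hci).not_gt (hlt.trans_le hi)

theorem expansion_weighted_L2_membership_criterion
    (N : ℕ) (hN : 2 ≤ N) (s : ℝ) (n : ℕ) (h : Fin n → ℝ) (hmono : StrictMono h)
    (u : Fin n → (Metric.sphere (0 : EuclideanSpace ℝ (Fin N)) 1 → ℂ))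
    (humeas : ∀ i, Measurable (u i))
    (hupos : ∀ i, 0 < ∫⁻ y, ENNReal.ofReal (‖u i y‖ ^ 2)
      ∂((volume : Measure (EuclideanSpace ℝ (Fin N))).toSphere))
    (hufin : ∀ i, (∫⁻ y, ENNReal.ofReal (‖u i y‖ ^ 2)
      ∂((volume : Measure (EuclideanSpace ℝ (Fin N))).toSphere)) < ⊤)
    (c : Fin n → ℂ)
    (f : EuclideanSpace ℝ (Fin N) → ℂ)
    (hf : ∀ (x : EuclideanSpace ℝ (Fin N)) (hx : x ≠ 0),
      f x = ∑ i, c i * ((‖x‖ ^ h i : ℝ) : ℂ) * u i (sphereProj x hx)) :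
    (∫⁻ x in {x : EuclideanSpace ℝ (Fin N) | 1 ≤ ‖x‖},
        ENNReal.ofReal ((1 + ‖x‖ ^ 2) ^ s * ‖f x‖ ^ 2)) < ⊤ ↔
      ∀ i, -s - N / 2 ≤ h i → c i = 0 := by
  classical
  simp_rw [lintegral_ofReal_norm_sq_eq_eLpNorm_sq] at hupos hufin
  have hU : ∀ i, MemLp (c i • u i) 2 (volume : Measure (EuclideanSpace ℝ (Fin N))).toSphere :=
    fun i => MemLp.const_smul ⟨(humeas i).aestronglyMeasurable, by simpa using hufin i⟩ (c i)
  have hw : ∀ i, (hU i).toLp _ ≠ 0 ↔ c i ≠ 0 := fun i => by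
    rw [← enorm_ne_zero, Lp.enorm_toLp, eLpNorm_const_smul]
    simpa using fun _ => (hupos i).ne'
  have hf' : ∀ x (hx : x ≠ 0), f x = ∑ i, ‖x‖ ^ h i • (c i • u i) (sphereProj x hx) :=
    fun x hx => (hf x hx).trans (Finset.sum_congr rfl fun i _ => by
      rw [Complex.real_smul, Pi.smul_apply, smul_eq_mul]; ring)
  rw [setLIntegral_one_le_norm_eq_lintegral_Ioi_eLpNorm (by omega) (W := fun r => (1 + r ^ 2) ^ s)
    (v := fun r y => ∑ i, r ^ h i • (c i • u i) y) (by fun_prop) (by fun_prop) hf']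
  simp_rw [eLpNorm_sum_smul_eq_enorm_sum_smul_toLp _ hU]
  obtain hzero | ⟨T, hT, hTmax⟩ := (Finset.univ.filter (c · ≠ 0)).eq_empty_or_nonempty.imp id
    fun hne => Finset.exists_max_image _ h hne
  · have hc : ∀ i, c i = 0 := by simpa [Finset.filter_eq_empty_iff] using hzero
    simp [hc]
  have hcT : c T ≠ 0 := (Finset.mem_filter.1 hT).2
  have hle : ∀ i, c i ≠ 0 → h i ≤ h T := fun i hi => hTmax i (by simpa using hi)
  rw [lintegral_Ioi_one_weight_mul_enorm_sq_lt_top_iff (half_pos (norm_pos_iff.2 ((hw T).2 hcT)))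
    _ (fun r hr => norm_sum_rpow_smul_le hr.le fun i _ hi => hle i ((hw i).1 hi))
    (eventually_le_norm_sum_rpow_smul (Finset.mem_univ T) ((hw T).2 hcT)
      fun i _ hiT hi => (hle i ((hw i).1 hi)).lt_of_ne (hmono.injective.ne hiT)),
    forall_le_imp_eq_zero_iff_lt hcT hle]
  constructor <;> intro <;> linarith

end
end

section
/- Let N ≥ 2 be a natural number, F a finite-dimensional real normed vector space, s, h ∈ ℝ, m ∈ ℕ, and let f : ℝ^N → F be smooth away from 0 and positively homogeneous of degree h, with f not vanishing identically on the unit sphere. Then the following are equivalent: (i) ∫_{A_1} (1+‖x‖²)^s ‖f(x)‖² dx < ∞; (ii) for every j ≤ m, ∫_{A_1} (1+‖x‖²)^s ‖D^j f(x)‖² dx < ∞; (iii) h < −s − N/2. (This is the characterization of Remark 2.5: for a smooth homogeneous field, membership in L²_s(A_1) is equivalent to membership in the weighted Sobolev space H^m_s(A_1) of any order m, and both are equivalent to h < −s − N/2.) -/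
/-!
Polar coordinates `x = r • u` turn the weighted integral of a function `g` that is positively
homogeneous of degree `a` into the product of `∫_{S^{N-1}} ‖g‖²` and the radial integral
`∫_1^∞ (1 + r²)^s r^(2a + N - 1) dr`, which is finite exactly when `2s + 2a + N < 0`.
The spherical factor is finite because `g` is continuous on the compact sphere, and it is positive
when `g` does not vanish identically there. Each derivative `D^j f` is homogeneous of degree
`h - j ≤ h`, so all of them are square integrable as soon as `f` is.
-/

open MeasureTheory Set Metric Module
open scoped ENNReal

theorem Real.rpow_le_rpow_abs_mul_rpow_of_le_mul {x y K : ℝ} (hx : 0 < x) (hy : 0 < y)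
    (hK : 1 ≤ K) (hxy : x ≤ K * y) (hyx : y ≤ K * x) (s : ℝ) : x ^ s ≤ K ^ |s| * y ^ s := by
  have hK0 : 0 < K := one_pos.trans_le hK
  rcases le_or_gt 0 s with hs | hs
  · calc x ^ s ≤ (K * y) ^ s := Real.rpow_le_rpow hx.le hxy hs
      _ = K ^ s * y ^ s := Real.mul_rpow hK0.le hy.le
      _ ≤ K ^ |s| * y ^ s := by gcongr; exact le_abs_self s
  · calc x ^ s ≤ (y / K) ^ s :=
          Real.rpow_le_rpow_of_nonpos (by positivity) ((div_le_iff₀ hK0).2 (by linarith)) hs.le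
      _ = K ^ |s| * y ^ s := by
          rw [Real.div_rpow hy.le hK0.le, abs_of_neg hs, Real.rpow_neg hK0.le]; ring

theorem integrableOn_Ici_one_add_sq_rpow_mul_rpow_iff {s q : ℝ} :
    IntegrableOn (fun r : ℝ => (1 + r ^ 2) ^ s * r ^ q) (Ici 1) ↔ 2 * s + q < -1 := by
  have hrpow : ∀ r : ℝ, 1 ≤ r → (r ^ 2) ^ s * r ^ q = r ^ (2 * s + q) := fun r hr => by
    rw [Real.rpow_add (by linarith), Real.rpow_mul (by linarith), Real.rpow_two]
  have hupper : ∀ r : ℝ, 1 ≤ r → (1 + r ^ 2) ^ s * r ^ q ≤ 2 ^ |s| * r ^ (2 * s + q) :=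
    fun r hr => by
      rw [← hrpow r hr, ← mul_assoc]
      gcongr
      exact Real.rpow_le_rpow_abs_mul_rpow_of_le_mul (by positivity) (by positivity) one_le_two
        (by nlinarith) (by nlinarith) s
  have hlower : ∀ r : ℝ, 1 ≤ r → r ^ (2 * s + q) ≤ 2 ^ |s| * ((1 + r ^ 2) ^ s * r ^ q) :=
    fun r hr => by
      rw [← hrpow r hr, ← mul_assoc]
      gcongr
      exact Real.rpow_le_rpow_abs_mul_rpow_of_le_mul (by positivity) (by positivity) one_le_two
        (by nlinarith) (by nlinarith) s
  rw [← integrableOn_Ioi_rpow_iff one_pos, ← integrableOn_Ici_iff_integrableOn_Ioi]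
  constructor
  · intro h
    refine (h.const_mul (2 ^ |s|)).mono' (by fun_prop) ?_
    filter_upwards [ae_restrict_mem measurableSet_Ici] with r (hr : 1 ≤ r)
    rw [Real.norm_of_nonneg (by positivity)]
    exact hlower r hr
  · intro h
    refine (h.const_mul (2 ^ |s|)).mono' (by fun_prop) ?_
    filter_upwards [ae_restrict_mem measurableSet_Ici] with r (hr : 1 ≤ r)
    rw [Real.norm_of_nonneg (by positivity)]
    exact hupper r hr

theorem lintegral_Ici_one_add_sq_rpow_mul_rpow_lt_top_iff {s q : ℝ} :
    ∫⁻ r in Ici (1 : ℝ), ENNReal.ofReal ((1 + r ^ 2) ^ s * r ^ q) < ⊤ ↔ 2 * s + q < -1 := by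
  rw [lt_top_iff_ne_top, lintegral_ofReal_ne_top_iff_integrable (by fun_prop)]
  · exact integrableOn_Ici_one_add_sq_rpow_mul_rpow_iff
  · filter_upwards [ae_restrict_mem measurableSet_Ici] with r (hr : 1 ≤ r)
    positivity

theorem ContinuousMultilinearMap.compContinuousLinearMap_smul_id {𝕜 E F : Type*}
    [NontriviallyNormedField 𝕜] [NormedAddCommGroup E] [NormedSpace 𝕜 E] [NormedAddCommGroup F]
    [NormedSpace 𝕜 F] {j : ℕ} (M : ContinuousMultilinearMap 𝕜 (fun _ : Fin j => E) F) (t : 𝕜) :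
    M.compContinuousLinearMap (fun _ => t • ContinuousLinearMap.id 𝕜 E) = t ^ j • M := by
  ext m
  simp [ContinuousMultilinearMap.map_smul_univ]

theorem iteratedFDerivWithin_smul_of_homogeneous {E F : Type*}
    [NormedAddCommGroup E] [NormedSpace ℝ E] [NormedAddCommGroup F] [NormedSpace ℝ F]
    {f : E → F} {h : ℝ} (hsm : ContDiffOn ℝ (⊤ : ℕ∞) f {0}ᶜ)
    (hhom : ∀ t : ℝ, 0 < t → ∀ x : E, x ≠ 0 → f (t • x) = t ^ h • f x)
    (j : ℕ) {t : ℝ} (ht : 0 < t) {x : E} (hx : x ≠ 0) :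
    iteratedFDerivWithin ℝ j f {0}ᶜ (t • x) = t ^ (h - j) • iteratedFDerivWithin ℝ j f {0}ᶜ x := by
  set S : Set E := {0}ᶜ
  have hS : UniqueDiffOn ℝ S := isOpen_compl_singleton.uniqueDiffOn
  let e : E ≃L[ℝ] E := ContinuousLinearEquiv.smulLeft (Units.mk0 t ht.ne')
  have he : ∀ y, e y = t • y := fun y => rfl
  have hpre : e ⁻¹' S = S := by ext y; simp [S, he, ht.ne']
  have hcomp :
      iteratedFDerivWithin ℝ j (f ∘ e) S x = t ^ j • iteratedFDerivWithin ℝ j f S (t • x) := by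
    have := e.iteratedFDerivWithin_comp_right f hS (x := x) (by simpa [he, S, ht.ne'] using hx) j
    rw [hpre, he] at this
    rw [this, ← ContinuousMultilinearMap.compContinuousLinearMap_smul_id]
    rfl
  have hscale : iteratedFDerivWithin ℝ j (f ∘ e) S x = t ^ h • iteratedFDerivWithin ℝ j f S x := by
    have heq : EqOn (f ∘ e) (t ^ h • f) S := fun y hy => hhom t ht y hy
    rw [iteratedFDerivWithin_congr heq hx]
    exact iteratedFDerivWithin_const_smul_apply
      ((hsm.contDiffWithinAt hx).of_le (by exact_mod_cast le_top)) hS hx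
  calc iteratedFDerivWithin ℝ j f S (t • x)
      = (t ^ j)⁻¹ • t ^ j • iteratedFDerivWithin ℝ j f S (t • x) :=
        (inv_smul_smul₀ (by positivity) _).symm
    _ = t ^ (h - j) • iteratedFDerivWithin ℝ j f S x := by
        rw [← hcomp, hscale, smul_smul, Real.rpow_sub ht, Real.rpow_natCast, div_eq_inv_mul]

section Sphere

variable {E V : Type*} [NormedAddCommGroup E] [MeasurableSpace E] [BorelSpace E]
  [NormedAddCommGroup V] (ν : Measure (sphere (0 : E) 1)) {g : E → V}

theorem lintegral_sphere_ofReal_norm_sq_lt_top [NormedSpace ℝ E] [FiniteDimensional ℝ E]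
    [IsFiniteMeasure ν] (hg : ContinuousOn g {0}ᶜ) :
    ∫⁻ u, ENNReal.ofReal (‖g u‖ ^ 2) ∂ν < ⊤ := by
  have hcont : Continuous fun u : sphere (0 : E) 1 => ‖g u‖ ^ 2 :=
    (hg.comp_continuous continuous_subtype_val fun u => ne_zero_of_mem_unit_sphere u).norm.pow 2
  exact (hcont.integrable_of_hasCompactSupport (.of_compactSpace _)).lintegral_lt_top

theorem lintegral_sphere_ofReal_norm_sq_pos [ν.IsOpenPosMeasure] (hg : ContinuousOn g {0}ᶜ)
    (hne : ∃ x : E, ‖x‖ = 1 ∧ g x ≠ 0) :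
    0 < ∫⁻ u, ENNReal.ofReal (‖g u‖ ^ 2) ∂ν := by
  obtain ⟨x, hx, hgx⟩ := hne
  have hcont : Continuous fun u : sphere (0 : E) 1 => ENNReal.ofReal (‖g u‖ ^ 2) :=
    ENNReal.continuous_ofReal.comp
      ((hg.comp_continuous continuous_subtype_val fun u => ne_zero_of_mem_unit_sphere u).norm.pow 2)
  rw [lintegral_pos_iff_support hcont.measurable]
  exact hcont.isOpen_support.measure_pos _ ⟨⟨x, mem_sphere_zero_iff_norm.2 hx⟩, by simpa using hgx⟩

end Sphere

section Polar

variable {E : Type*} [NormedAddCommGroup E] [NormedSpace ℝ E] [FiniteDimensional ℝ E]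
  [Nontrivial E] [MeasurableSpace E] [BorelSpace E] (μ : Measure E) [μ.IsAddHaarMeasure]

instance : μ.toSphere.IsOpenPosMeasure where
  open_pos U hU hUne := by
    rw [μ.toSphere_apply' hU.measurableSet]
    exact mul_ne_zero (by simp [finrank_pos.ne'])
      ((IsOpen.smul_sphere one_ne_zero isOpen_Ioo (by simp) hU).measure_pos μ
        ((nonempty_Ioo.2 one_pos).smul (hUne.image _))).ne'

theorem lintegral_eq_lintegral_toSphere_lintegral_Ioi {G : E → ℝ≥0∞} (hG : Measurable G) :
    ∫⁻ x, G x ∂μ = ∫⁻ u : sphere (0 : E) 1,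
      (∫⁻ r in Ioi (0 : ℝ), ENNReal.ofReal (r ^ (finrank ℝ E - 1)) * G (r • (u : E)))
        ∂μ.toSphere := by
  have hmeas : Measurable fun p : sphere (0 : E) 1 × Ioi (0 : ℝ) => G ((p.2 : ℝ) • (p.1 : E)) := by
    fun_prop
  calc ∫⁻ x, G x ∂μ = ∫⁻ x : ({0}ᶜ : Set E), G x ∂μ.comap (↑) := by
        rw [lintegral_subtype_comap (measurableSet_singleton _).compl, restrict_compl_singleton]
    _ = ∫⁻ p, G ((p.2 : ℝ) • (p.1 : E))
          ∂μ.toSphere.prod (Measure.volumeIoiPow (finrank ℝ E - 1)) := by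
        rw [← μ.measurePreserving_homeomorphUnitSphereProd.lintegral_comp_emb
          (Homeomorph.measurableEmbedding _)]
        congr 1 with x
        simp [smul_smul, mul_inv_cancel₀ (norm_ne_zero_iff.2 x.2)]
    _ = _ := by
        rw [lintegral_prod _ hmeas.aemeasurable]
        congr 1 with u
        rw [Measure.volumeIoiPow,
          lintegral_withDensity_eq_lintegral_mul _ (by fun_prop) (by fun_prop),
          ← lintegral_subtype_comap measurableSet_Ioi]
        rfl

variable {V : Type*} [NormedAddCommGroup V] [NormedSpace ℝ V] {g : E → V} {a : ℝ}

theorem setLIntegral_one_le_norm_eq_mul_of_homogeneous (hg : ContinuousOn g {0}ᶜ)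
    (hhom : ∀ t : ℝ, 0 < t → ∀ x : E, x ≠ 0 → g (t • x) = t ^ a • g x) (s : ℝ) :
    ∫⁻ x in {x : E | 1 ≤ ‖x‖}, ENNReal.ofReal ((1 + ‖x‖ ^ 2) ^ s * ‖g x‖ ^ 2) ∂μ =
      (∫⁻ u : sphere (0 : E) 1, ENNReal.ofReal (‖g u‖ ^ 2) ∂μ.toSphere) *
        ∫⁻ r in Ici (1 : ℝ),
          ENNReal.ofReal ((1 + r ^ 2) ^ s * r ^ (2 * a + (finrank ℝ E - 1 : ℝ))) := by
  have hS : MeasurableSet {x : E | 1 ≤ ‖x‖} := measurableSet_le measurable_const measurable_norm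
  have hgm : Measurable fun x => ‖g x‖ := measurable_of_continuousOn_compl_singleton 0 hg.norm
  have hgs : Measurable fun u : sphere (0 : E) 1 => ENNReal.ofReal (‖g u‖ ^ 2) :=
    ((hgm.comp measurable_subtype_coe).pow_const 2).ennreal_ofReal
  rw [← lintegral_indicator hS, lintegral_eq_lintegral_toSphere_lintegral_Ioi μ
    ((by fun_prop : Measurable _).indicator hS),
    ← lintegral_mul_const _ hgs]
  congr 1 with u
  rw [← lintegral_const_mul _ (by fun_prop), ← inter_eq_left.2 (Ici_subset_Ioi.2 one_pos),
    ← setLIntegral_indicator (μ := volume) measurableSet_Ici]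
  refine setLIntegral_congr_fun measurableSet_Ioi fun r (hr : 0 < r) => ?_
  have hru : ‖r • (u : E)‖ = r := by
    rw [norm_smul, norm_eq_of_mem_sphere u, mul_one, Real.norm_of_nonneg hr.le]
  by_cases h1r : 1 ≤ r
  · rw [indicator_of_mem (by exact h1r.trans_eq hru.symm), indicator_of_mem (by exact h1r),
      hhom r hr _ (ne_zero_of_mem_unit_sphere u), hru, norm_smul,
      Real.norm_of_nonneg (by positivity), ← ENNReal.ofReal_mul (by positivity),
      ← ENNReal.ofReal_mul (by positivity), Real.rpow_add hr, ← Nat.cast_pred finrank_pos,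
      Real.rpow_natCast, mul_comm 2 a, Real.rpow_mul hr.le, Real.rpow_two]
    ring_nf
  · rw [indicator_of_notMem (by exact fun h => h1r (hru ▸ h)),
      indicator_of_notMem (by exact h1r), mul_zero]

theorem setLIntegral_one_le_norm_lt_top_of_homogeneous (hg : ContinuousOn g {0}ᶜ)
    (hhom : ∀ t : ℝ, 0 < t → ∀ x : E, x ≠ 0 → g (t • x) = t ^ a • g x) {s : ℝ}
    (ha : a < -s - finrank ℝ E / 2) :
    ∫⁻ x in {x : E | 1 ≤ ‖x‖}, ENNReal.ofReal ((1 + ‖x‖ ^ 2) ^ s * ‖g x‖ ^ 2) ∂μ < ⊤ := by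
  rw [setLIntegral_one_le_norm_eq_mul_of_homogeneous μ hg hhom]
  exact ENNReal.mul_lt_top (lintegral_sphere_ofReal_norm_sq_lt_top _ hg)
    (lintegral_Ici_one_add_sq_rpow_mul_rpow_lt_top_iff.2 (by linarith))

theorem setLIntegral_one_le_norm_lt_top_iff_of_homogeneous (hg : ContinuousOn g {0}ᶜ)
    (hhom : ∀ t : ℝ, 0 < t → ∀ x : E, x ≠ 0 → g (t • x) = t ^ a • g x)
    (hne : ∃ x : E, ‖x‖ = 1 ∧ g x ≠ 0) (s : ℝ) :
    ∫⁻ x in {x : E | 1 ≤ ‖x‖}, ENNReal.ofReal ((1 + ‖x‖ ^ 2) ^ s * ‖g x‖ ^ 2) ∂μ < ⊤ ↔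
      a < -s - finrank ℝ E / 2 := by
  refine ⟨fun hfin => ?_, setLIntegral_one_le_norm_lt_top_of_homogeneous μ hg hhom⟩
  rw [setLIntegral_one_le_norm_eq_mul_of_homogeneous μ hg hhom] at hfin
  have hradial := lintegral_Ici_one_add_sq_rpow_mul_rpow_lt_top_iff.1
    (ENNReal.lt_top_of_mul_ne_top_right hfin.ne (lintegral_sphere_ofReal_norm_sq_pos _ hg hne).ne')
  linarith

end Polar

theorem homogeneous_weighted_L2_Sobolev_criterion_general
    (N : ℕ) (F : Type*) [NormedAddCommGroup F] [NormedSpace ℝ F]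
    (s h : ℝ) (m : ℕ)
    (f : EuclideanSpace ℝ (Fin N) → F)
    (hsm : ContDiffOn ℝ (⊤ : ℕ∞) f {(0 : EuclideanSpace ℝ (Fin N))}ᶜ)
    (hhom : ∀ t : ℝ, 0 < t → ∀ x : EuclideanSpace ℝ (Fin N), x ≠ 0 →
      f (t • x) = t ^ h • f x)
    (hne : ∃ x : EuclideanSpace ℝ (Fin N), ‖x‖ = 1 ∧ f x ≠ 0) :
    ((∫⁻ x in {x : EuclideanSpace ℝ (Fin N) | 1 ≤ ‖x‖},
        ENNReal.ofReal ((1 + ‖x‖ ^ 2) ^ s * ‖f x‖ ^ 2)) < ⊤ ↔ h < -s - N / 2) ∧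
    ((∀ j ≤ m,
        (∫⁻ x in {x : EuclideanSpace ℝ (Fin N) | 1 ≤ ‖x‖},
          ENNReal.ofReal ((1 + ‖x‖ ^ 2) ^ s *
            ‖iteratedFDerivWithin ℝ j f {(0 : EuclideanSpace ℝ (Fin N))}ᶜ x‖ ^ 2)) < ⊤)
      ↔ h < -s - N / 2) := by
  have : Nontrivial (EuclideanSpace ℝ (Fin N)) := by
    obtain ⟨x₀, hx₀, -⟩ := hne
    exact ⟨⟨x₀, 0, by rintro rfl; simp at hx₀⟩⟩
  have hf := setLIntegral_one_le_norm_lt_top_iff_of_homogeneous volume hsm.continuousOn hhom hne s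
  rw [finrank_euclideanSpace_fin] at hf
  refine ⟨hf, fun hD => hf.1 (by simpa using hD 0 m.zero_le), fun hlt j _ => ?_⟩
  have hDj := setLIntegral_one_le_norm_lt_top_of_homogeneous volume
    (hsm.continuousOn_iteratedFDerivWithin (by exact_mod_cast le_top)
      isOpen_compl_singleton.uniqueDiffOn)
    (fun t ht x hx => iteratedFDerivWithin_smul_of_homogeneous hsm hhom j ht hx) (s := s)
  rw [finrank_euclideanSpace_fin] at hDj
  exact hDj (by linarith [(j.cast_nonneg : (0 : ℝ) ≤ j)])

theorem homogeneous_weighted_L2_Sobolev_criterion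
    (N : ℕ) (hN : 2 ≤ N) (F : Type*) [NormedAddCommGroup F] [NormedSpace ℝ F]
    [FiniteDimensional ℝ F] (s h : ℝ) (m : ℕ)
    (f : EuclideanSpace ℝ (Fin N) → F)
    (hsm : ContDiffOn ℝ (⊤ : ℕ∞) f {(0 : EuclideanSpace ℝ (Fin N))}ᶜ)
    (hhom : ∀ t : ℝ, 0 < t → ∀ x : EuclideanSpace ℝ (Fin N), x ≠ 0 →
      f (t • x) = t ^ h • f x)
    (hne : ∃ x : EuclideanSpace ℝ (Fin N), ‖x‖ = 1 ∧ f x ≠ 0) :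
    ((∫⁻ x in {x : EuclideanSpace ℝ (Fin N) | 1 ≤ ‖x‖},
        ENNReal.ofReal ((1 + ‖x‖ ^ 2) ^ s * ‖f x‖ ^ 2)) < ⊤ ↔ h < -s - N / 2) ∧
    ((∀ j ≤ m,
        (∫⁻ x in {x : EuclideanSpace ℝ (Fin N) | 1 ≤ ‖x‖},
          ENNReal.ofReal ((1 + ‖x‖ ^ 2) ^ s *
            ‖iteratedFDerivWithin ℝ j f {(0 : EuclideanSpace ℝ (Fin N))}ᶜ x‖ ^ 2)) < ⊤)
      ↔ h < -s - N / 2) :=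
  homogeneous_weighted_L2_Sobolev_criterion_general N F s h m f hsm hhom hne
end

section
/- Let N ≥ 1 be a natural number, F a finite-dimensional real normed vector space, s, h ∈ ℝ with h < −s − N/2, and let f : ℝ^N → F be smooth away from 0 and positively homogeneous of degree h. Then for every m ∈ ℕ, ∫_{A_1} (1+‖x‖²)^s ‖D^m f(x)‖² dx < ∞; that is, f together with all its derivatives of every order lies in the weighted space L²_s(A_1). -/
/-!
Differentiating `f (t • x) = t ^ h • f x` `m` times shows that `D^m f` is positively homogeneous
of degree `h - m`. Being continuous on the unit sphere, it is bounded there, so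
`‖D^m f x‖ ≤ C ‖x‖ ^ (h - m)` away from `0`. On `1 ≤ ‖x‖` the weighted integrand is then at most
a multiple of `(1 + ‖x‖²) ^ (s + h - m)`, which is integrable on `ℝ^N` because
`2 (s + h - m) < -N`.
-/

open MeasureTheory Module

def IsPosHomogeneous {E F : Type*} [Zero E] [SMul ℝ E] [SMul ℝ F] (h : ℝ) (f : E → F) : Prop :=
  ∀ t : ℝ, 0 < t → ∀ x : E, x ≠ 0 → f (t • x) = t ^ h • f x

section

variable {E F : Type*} [NormedAddCommGroup E] [NormedSpace ℝ E]
  [NormedAddCommGroup F] [NormedSpace ℝ F]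

theorem IsPosHomogeneous.iteratedFDerivWithin {f : E → F} {h : ℝ} {m : ℕ}
    (hf : IsPosHomogeneous h f) (hsm : ContDiffOn ℝ m f {0}ᶜ) :
    IsPosHomogeneous (h - m) (_root_.iteratedFDerivWithin ℝ m f {0}ᶜ) := by
  intro t ht x hx
  have hU : UniqueDiffOn ℝ ({0}ᶜ : Set E) := isOpen_compl_singleton.uniqueDiffOn
  let e : E ≃L[ℝ] E := ContinuousLinearEquiv.smulLeft (Units.mk0 t ht.ne')
  have he : ∀ y, e y = t • y := fun _ => rfl
  have hpre : (⇑e) ⁻¹' ({0}ᶜ : Set E) = {0}ᶜ := by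
    ext y; simp [he, ht.ne']
  have hfe : Set.EqOn (f ∘ e) (t ^ h • f) {0}ᶜ := fun y hy => hf t ht y hy
  have hscale :=
    e.iteratedFDerivWithin_comp_right f hU (x := x) (by simpa [he, ht.ne'] using hx) m
  rw [hpre, iteratedFDerivWithin_congr hfe hx,
    iteratedFDerivWithin_const_smul_apply (hsm x hx) hU hx] at hscale
  have hcomp : (_root_.iteratedFDerivWithin ℝ m f {0}ᶜ (t • x)).compContinuousLinearMap
      (fun _ => (e : E →L[ℝ] E)) = t ^ m • _root_.iteratedFDerivWithin ℝ m f {0}ᶜ (t • x) := by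
    ext v
    simp [he, ContinuousMultilinearMap.map_smul_univ]
  rw [he, hcomp] at hscale
  -- `hscale : t ^ h • D^m f x = t ^ m • D^m f (t • x)`, by differentiating `f ∘ (t • ·)` two ways
  rw [Real.rpow_sub ht, Real.rpow_natCast, div_eq_inv_mul, mul_smul, hscale, smul_smul,
    inv_mul_cancel₀ (pow_ne_zero m ht.ne'), one_smul]

theorem IsPosHomogeneous.exists_norm_le_mul_rpow [ProperSpace E] {g : E → F} {a : ℝ}
    (hg : IsPosHomogeneous a g) (hcont : ContinuousOn g {0}ᶜ) :
    ∃ C, ∀ x, x ≠ 0 → ‖g x‖ ≤ C * ‖x‖ ^ a := by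
  have hsphere : Metric.sphere (0 : E) 1 ⊆ {0}ᶜ := fun x hx h0 => by simp_all
  obtain ⟨C, hC⟩ := (isCompact_sphere (0 : E) 1).exists_bound_of_continuousOn (hcont.mono hsphere)
  refine ⟨C, fun x hx => ?_⟩
  have hx' : 0 < ‖x‖ := norm_pos_iff.2 hx
  have hu : ‖x‖⁻¹ • x ∈ Metric.sphere (0 : E) 1 := by
    simp [norm_smul, hx'.ne']
  have hgx := hg _ hx' _ (hsphere hu)
  rw [smul_inv_smul₀ hx'.ne'] at hgx
  calc ‖g x‖ = ‖x‖ ^ a * ‖g (‖x‖⁻¹ • x)‖ := by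
        rw [hgx, norm_smul, Real.norm_eq_abs, abs_of_pos (Real.rpow_pos_of_pos hx' a)]
    _ ≤ C * ‖x‖ ^ a := by
        rw [mul_comm]; exact mul_le_mul_of_nonneg_right (hC _ hu) (by positivity)

end

theorem Real.rpow_le_two_rpow_abs_mul_one_add_rpow {u : ℝ} (hu : 1 ≤ u) (a : ℝ) :
    u ^ a ≤ 2 ^ |a| * (1 + u) ^ a := by
  rcases le_or_gt 0 a with ha | ha
  · calc u ^ a ≤ (1 + u) ^ a := Real.rpow_le_rpow (by linarith) (by linarith) ha
      _ ≤ 2 ^ |a| * (1 + u) ^ a :=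
        le_mul_of_one_le_left (by positivity) (Real.one_le_rpow one_le_two (abs_nonneg a))
  · calc u ^ a ≤ ((1 + u) / 2) ^ a := Real.rpow_le_rpow_of_nonpos (by positivity) (by linarith) ha.le
      _ = 2 ^ |a| * (1 + u) ^ a := by
        rw [Real.div_rpow (by linarith) zero_le_two, abs_of_neg ha, Real.rpow_neg zero_le_two,
          div_eq_inv_mul]

theorem setLIntegral_one_add_norm_sq_rpow_mul_sq_lt_top {E G : Type*} [NormedAddCommGroup E]
    [NormedSpace ℝ E] [FiniteDimensional ℝ E] [MeasurableSpace E] [BorelSpace E]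
    (μ : Measure E) [μ.IsAddHaarMeasure] [NormedAddCommGroup G] {g : E → G} {C a s : ℝ}
    (hdim : (finrank ℝ E : ℝ) < -2 * (s + a)) (hg : ∀ x, 1 ≤ ‖x‖ → ‖g x‖ ≤ C * ‖x‖ ^ a) :
    ∫⁻ x in {x | 1 ≤ ‖x‖}, ENNReal.ofReal ((1 + ‖x‖ ^ 2) ^ s * ‖g x‖ ^ 2) ∂μ < ⊤ := by
  have hint := integrable_rpow_neg_one_add_norm_sq (μ := μ) hdim
  rw [show -(-2 * (s + a)) / 2 = s + a by ring] at hint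
  have hA : MeasurableSet {x : E | 1 ≤ ‖x‖} := measurableSet_le measurable_const measurable_norm
  refine lt_of_le_of_lt (setLIntegral_mono' hA fun x hx => ENNReal.ofReal_le_ofReal ?_)
    ((hint.const_mul (C ^ 2 * 2 ^ |a|)).integrableOn.lintegral_lt_top)
  have hx : (1 : ℝ) ≤ ‖x‖ := hx
  have hw : 0 < 1 + ‖x‖ ^ 2 := by positivity
  have hsq : (‖x‖ ^ a) ^ 2 ≤ 2 ^ |a| * (1 + ‖x‖ ^ 2) ^ a := by
    rw [Real.rpow_pow_comm (norm_nonneg x)]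
    exact Real.rpow_le_two_rpow_abs_mul_one_add_rpow (one_le_pow₀ hx) a
  calc (1 + ‖x‖ ^ 2) ^ s * ‖g x‖ ^ 2 ≤ (1 + ‖x‖ ^ 2) ^ s * (C ^ 2 * (‖x‖ ^ a) ^ 2) := by
        rw [← mul_pow]
        exact mul_le_mul_of_nonneg_left (pow_le_pow_left₀ (norm_nonneg _) (hg x hx) 2)
          (by positivity)
    _ ≤ (1 + ‖x‖ ^ 2) ^ s * (C ^ 2 * (2 ^ |a| * (1 + ‖x‖ ^ 2) ^ a)) := by gcongr
    _ = C ^ 2 * 2 ^ |a| * (1 + ‖x‖ ^ 2) ^ (s + a) := by rw [Real.rpow_add hw]; ring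

theorem homogeneous_derivatives_in_weighted_L2_general
    (N : ℕ) (F : Type*) [NormedAddCommGroup F] [NormedSpace ℝ F]
    (s h : ℝ) (hh : h < -s - N / 2)
    (f : EuclideanSpace ℝ (Fin N) → F)
    (hsm : ContDiffOn ℝ (⊤ : ℕ∞) f {(0 : EuclideanSpace ℝ (Fin N))}ᶜ)
    (hhom : ∀ t : ℝ, 0 < t → ∀ x : EuclideanSpace ℝ (Fin N), x ≠ 0 →
      f (t • x) = t ^ h • f x) :
    ∀ m : ℕ,
      (∫⁻ x in {x : EuclideanSpace ℝ (Fin N) | 1 ≤ ‖x‖},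
        ENNReal.ofReal ((1 + ‖x‖ ^ 2) ^ s *
          ‖iteratedFDerivWithin ℝ m f {(0 : EuclideanSpace ℝ (Fin N))}ᶜ x‖ ^ 2)) < ⊤ := by
  intro m
  have hDm : IsPosHomogeneous (h - m) (iteratedFDerivWithin ℝ m f {0}ᶜ) :=
    IsPosHomogeneous.iteratedFDerivWithin hhom (hsm.of_le (by exact_mod_cast le_top))
  obtain ⟨C, hC⟩ := hDm.exists_norm_le_mul_rpow
    (hsm.continuousOn_iteratedFDerivWithin (by exact_mod_cast le_top)
      isOpen_compl_singleton.uniqueDiffOn)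
  refine setLIntegral_one_add_norm_sq_rpow_mul_sq_lt_top volume ?_
    fun x hx => hC x (norm_pos_iff.1 (one_pos.trans_le hx))
  rw [finrank_euclideanSpace_fin]
  linarith [m.cast_nonneg (α := ℝ)]

theorem homogeneous_derivatives_in_weighted_L2
    (N : ℕ) (hN : 1 ≤ N) (F : Type*) [NormedAddCommGroup F] [NormedSpace ℝ F]
    [FiniteDimensional ℝ F] (s h : ℝ) (hh : h < -s - N / 2)
    (f : EuclideanSpace ℝ (Fin N) → F)
    (hsm : ContDiffOn ℝ (⊤ : ℕ∞) f {(0 : EuclideanSpace ℝ (Fin N))}ᶜ)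
    (hhom : ∀ t : ℝ, 0 < t → ∀ x : EuclideanSpace ℝ (Fin N), x ≠ 0 →
      f (t • x) = t ^ h • f x) :
    ∀ m : ℕ,
      (∫⁻ x in {x : EuclideanSpace ℝ (Fin N) | 1 ≤ ‖x‖},
        ENNReal.ofReal ((1 + ‖x‖ ^ 2) ^ s *
          ‖iteratedFDerivWithin ℝ m f {(0 : EuclideanSpace ℝ (Fin N))}ᶜ x‖ ^ 2)) < ⊤ :=
  homogeneous_derivatives_in_weighted_L2_general N F s h hh f hsm hhom
end
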